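/- arXiv:2006.03393 — 3 statements merged into one kernel-verified Lean document; each statement's English description precedes it below -/
import Mathlib

section
/- Let n ≥ 1 and let u be a diagonal complex n×n matrix. Then [u ⊗ 1 − 1 ⊗ u, 2Ω_k − Ω] = 0, equivalently [u ⊗ 1, 2Ω_k − Ω] + [2Ω_k − Ω, 1 ⊗ u] = 0, where Ω := Σ_{a,b=1}^n E_{ab} ⊗ E_{ba} and Ω_k := −(1/4) Σ_{a,b=1}^n (E_{ab} − E_{ba}) ⊗ (E_{ab} − E_{ba}) (Kronecker products). -/
open Matrix Kronecker BigOperators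

/-- The matrix unit `E a b` with a `1` in entry `(a,b)` and `0` elsewhere. -/
noncomputable def E (n : ℕ) (a b : Fin n) : Matrix (Fin n) (Fin n) ℂ :=
  Matrix.single a b 1

/-- The Casimir tensor `Ω = Σ_{a,b} E_{ab} ⊗ E_{ba}` of `gl_n`, as a Kronecker product. -/
noncomputable def Omega (n : ℕ) : Matrix (Fin n × Fin n) (Fin n × Fin n) ℂ :=
  ∑ a : Fin n, ∑ b : Fin n, E n a b ⊗ₖ E n b a

/-- The Casimir tensor `Ω_k = -(1/4) Σ_{a,b} (E_{ab} - E_{ba}) ⊗ (E_{ab} - E_{ba})` of `so_n`. -/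
noncomputable def OmegaK (n : ℕ) : Matrix (Fin n × Fin n) (Fin n × Fin n) ℂ :=
  -(1 / 4 : ℂ) • ∑ a : Fin n, ∑ b : Fin n, (E n a b - E n b a) ⊗ₖ (E n a b - E n b a)


/-! `2Ω_k − Ω` is minus the rank-one matrix `vec 1 (vec 1)ᵀ`, and for symmetric `u` the operator
`u ⊗ 1 − 1 ⊗ u` annihilates `vec 1` from both sides, since it sends it to `±vec (uᵀ − u)`.
Hence both products in the commutator vanish. -/

section kronecker

variable {l m n p α : Type*} [NonUnitalNonAssocRing α]

theorem sub_kronecker (A₁ A₂ : Matrix l m α) (B : Matrix n p α) :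
    (A₁ - A₂) ⊗ₖ B = A₁ ⊗ₖ B - A₂ ⊗ₖ B := by
  ext; simp [sub_mul]

theorem kronecker_sub (A : Matrix l m α) (B₁ B₂ : Matrix n p α) :
    A ⊗ₖ (B₁ - B₂) = A ⊗ₖ B₁ - A ⊗ₖ B₂ := by
  ext; simp [mul_sub]

end kronecker

section vecOne

variable {ι R : Type*} [Fintype ι] [DecidableEq ι] [CommRing R]

theorem sum_single_kronecker_single_self :
    ∑ a : ι, ∑ b : ι, single a b (1 : R) ⊗ₖ single a b 1
      = vecMulVec (vec (1 : Matrix ι ι R)) (vec 1) := by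
  ext ⟨i, j⟩ ⟨k, l⟩
  simp only [Matrix.sum_apply, kroneckerMap_apply, single_apply, ite_and, mul_ite, mul_one,
    mul_zero, Finset.sum_ite_irrel, Finset.sum_ite_eq', Finset.mem_univ, ↓reduceIte,
    Finset.sum_const_zero, vecMulVec_apply, vec, one_apply]
  split_ifs <;> rfl

theorem kronecker_one_sub_one_kronecker_mulVec_vec_one (u : Matrix ι ι R) :
    (u ⊗ₖ (1 : Matrix ι ι R) - 1 ⊗ₖ u) *ᵥ vec 1 = vec (uᵀ - u) := by
  rw [sub_mulVec, kronecker_mulVec_vec, kronecker_mulVec_vec, vec_sub]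
  simp

theorem vec_one_vecMul_kronecker_one_sub_one_kronecker (u : Matrix ι ι R) :
    vec 1 ᵥ* (u ⊗ₖ (1 : Matrix ι ι R) - 1 ⊗ₖ u) = vec (u - uᵀ) := by
  rw [vecMul_sub, vec_vecMul_kronecker, vec_vecMul_kronecker, vec_sub]
  simp

theorem commute_kronecker_one_sub_one_kronecker_vecMulVec_vec_one {u : Matrix ι ι R}
    (hu : u.IsSymm) :
    Commute (u ⊗ₖ (1 : Matrix ι ι R) - 1 ⊗ₖ u) (vecMulVec (vec 1) (vec 1)) := by
  rw [Commute, SemiconjBy, mul_vecMulVec, vecMulVec_mul,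
    kronecker_one_sub_one_kronecker_mulVec_vec_one,
    vec_one_vecMul_kronecker_one_sub_one_kronecker, hu.eq, sub_self, vec_zero]
  simp

end vecOne

theorem two_smul_OmegaK_sub_Omega (n : ℕ) :
    (2 : ℂ) • OmegaK n - Omega n = -∑ a : Fin n, ∑ b : Fin n, E n a b ⊗ₖ E n a b := by
  have swap_self : ∑ a : Fin n, ∑ b : Fin n, E n b a ⊗ₖ E n b a
      = ∑ a : Fin n, ∑ b : Fin n, E n a b ⊗ₖ E n a b := Finset.sum_comm
  have Omega_eq : ∑ a : Fin n, ∑ b : Fin n, E n a b ⊗ₖ E n b a = Omega n := rfl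
  have swap_Omega : ∑ a : Fin n, ∑ b : Fin n, E n b a ⊗ₖ E n a b = Omega n := Finset.sum_comm
  simp only [OmegaK, sub_kronecker, kronecker_sub, Finset.sum_sub_distrib, swap_self, swap_Omega,
    Omega_eq]
  module

theorem commutator_u_twoOmegaK_sub_Omega_eq_zero_general (n : ℕ)
    (u : Matrix (Fin n) (Fin n) ℂ) (hu : u.IsDiag) :
    (u ⊗ₖ (1 : Matrix (Fin n) (Fin n) ℂ) - (1 : Matrix (Fin n) (Fin n) ℂ) ⊗ₖ u)
        * ((2 : ℂ) • OmegaK n - Omega n)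
      - ((2 : ℂ) • OmegaK n - Omega n)
        * (u ⊗ₖ (1 : Matrix (Fin n) (Fin n) ℂ) - (1 : Matrix (Fin n) (Fin n) ℂ) ⊗ₖ u)
      = 0 := by
  rw [two_smul_OmegaK_sub_Omega, sub_eq_zero]
  simp only [E, sum_single_kronecker_single_self]
  exact (commute_kronecker_one_sub_one_kronecker_vecMulVec_vec_one hu.isSymm).neg_right.eq

theorem commutator_u_twoOmegaK_sub_Omega_eq_zero (n : ℕ) (hn : 1 ≤ n)
    (u : Matrix (Fin n) (Fin n) ℂ) (hu : u.IsDiag) :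
    (u ⊗ₖ (1 : Matrix (Fin n) (Fin n) ℂ) - (1 : Matrix (Fin n) (Fin n) ℂ) ⊗ₖ u)
        * ((2 : ℂ) • OmegaK n - Omega n)
      - ((2 : ℂ) • OmegaK n - Omega n)
        * (u ⊗ₖ (1 : Matrix (Fin n) (Fin n) ℂ) - (1 : Matrix (Fin n) (Fin n) ℂ) ⊗ₖ u)
      = 0 :=
  commutator_u_twoOmegaK_sub_Omega_eq_zero_general n u hu
end

section
/- Let m ≥ 1, let Ξ be a diagonal m×m matrix with real diagonal entries, let κ be a nonzero purely imaginary complex number, let M be a Hermitian m×m complex matrix, and let N be the Ξ-block part of M, i.e. N_{ij} = M_{ij} whenever Ξ_{ii} = Ξ_{jj} and N_{ij} = 0 otherwise. Then there exists a unique sequence (h_j)_{j≥0} of complex m×m matrices such that h₀ = I and, for every j ≥ 1, h_jΞ − Ξh_j = (κ(j−1)·I + M)·h_{j−1} − h_{j−1}·N. -/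
/-!
Let `P = blockPart ξ` keep the entries `(i, j)` with `ξ i = ξ j`. The map `B ↦ B Ξ - Ξ B`
multiplies the entry `(i, j)` by `ξ j - ξ i`, so its kernel is the image of `P` and its image is
the kernel of `P`. Hence the equation for `h_{j+1}` is solvable iff `P` kills its right-hand side,
and then determines `h_{j+1}` up to a block matrix `Y`. Requiring the equation for `h_{j+2}` to be
solvable pins `Y` down: for block `Y` the condition is `κ(j+1) Y + N Y - Y N = (known)`. As
`N = P M` is Hermitian, `Y ↦ N Y - Y N` is self-adjoint for the trace form `tr (Aᴴ B)`, so it has no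
eigenvalue `-κ(j+1) ∉ ℝ` and `Y` exists uniquely.
-/

open Matrix

theorem Nat.existsUnique_seq_of_existsUnique_step {α : Type*} (Q : ℕ → α → Prop)
    (S : ℕ → α → α → Prop) (a : α) (ha : Q 0 a) (hSQ : ∀ j x y, S j x y → Q j x)
    (hstep : ∀ j x, Q j x → ∃! y, S j x y ∧ Q (j + 1) y) :
    ∃! f : ℕ → α, f 0 = a ∧ ∀ j, S j (f j) (f (j + 1)) := by
  choose! next hnext using fun j x hx => (hstep j x hx).exists
  let f : ℕ → α := fun j => Nat.rec a (fun j x => next j x) j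
  have hfQ (j : ℕ) : Q j (f j) := by
    induction j with
    | zero => exact ha
    | succ j ih => exact (hnext j _ ih).2
  refine ⟨f, ⟨rfl, fun j => (hnext j _ (hfQ j)).1⟩, ?_⟩
  rintro g ⟨hg0, hgS⟩
  funext j
  induction j with
  | zero => exact hg0
  | succ j ih =>
    exact (hstep j (f j) (hfQ j)).unique ⟨ih ▸ hgS j, hSQ _ _ _ (hgS (j + 1))⟩ (hnext j _ (hfQ j))

namespace Matrix

variable {ι R : Type*}

theorem mul_diagonal_sub_diagonal_mul_apply [Fintype ι] [DecidableEq ι] [CommRing R]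
    {d : ι → R} (A : Matrix ι ι R) (i j : ι) :
    (A * diagonal d - diagonal d * A) i j = A i j * (d j - d i) := by
  simp [mul_sub, mul_comm]

section CommRing

variable [CommRing R] [DecidableEq R] {d : ι → R}

variable (d) in
def blockPart : Matrix ι ι R →ₗ[R] Matrix ι ι R where
  toFun A := of fun i j => if d i = d j then A i j else 0
  map_add' A B := by ext i j; by_cases h : d i = d j <;> simp [h]
  map_smul' c A := by ext i j; by_cases h : d i = d j <;> simp [h]

@[simp]
theorem blockPart_apply (A : Matrix ι ι R) (i j : ι) :
    blockPart d A i j = if d i = d j then A i j else 0 := rfl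

theorem blockPart_eq_self_iff {A : Matrix ι ι R} :
    blockPart d A = A ↔ ∀ i j, d i ≠ d j → A i j = 0 := by
  simp only [← Matrix.ext_iff, blockPart_apply]
  refine forall₂_congr fun i j => ?_
  by_cases h : d i = d j <;> simp [h, eq_comm]

@[simp]
theorem blockPart_blockPart (A : Matrix ι ι R) : blockPart d (blockPart d A) = blockPart d A :=
  blockPart_eq_self_iff.2 fun i j h => by simp [h]

variable [Fintype ι]

theorem blockPart_mul_of_blockPart_right {B : Matrix ι ι R} (hB : blockPart d B = B)
    (A : Matrix ι ι R) : blockPart d (A * B) = blockPart d A * B := by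
  rw [blockPart_eq_self_iff] at hB
  ext i k
  simp only [blockPart_apply, mul_apply, ite_mul, zero_mul]
  split_ifs with hik
  · refine Finset.sum_congr rfl fun l _ => ?_
    split_ifs with hil
    · rfl
    · exact mul_eq_zero_of_right _ (hB l k fun hlk => hil (hik.trans hlk.symm))
  · refine (Finset.sum_eq_zero fun l _ => ?_).symm
    split_ifs with hil
    · exact mul_eq_zero_of_right _ (hB l k fun hlk => hik (hil.trans hlk))
    · rfl

theorem blockPart_mul_of_blockPart_left {A : Matrix ι ι R} (hA : blockPart d A = A)
    (B : Matrix ι ι R) : blockPart d (A * B) = A * blockPart d B := by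
  rw [blockPart_eq_self_iff] at hA
  ext i k
  simp only [blockPart_apply, mul_apply, mul_ite, mul_zero]
  split_ifs with hik
  · refine Finset.sum_congr rfl fun l _ => ?_
    split_ifs with hlk
    · rfl
    · exact mul_eq_zero_of_left (hA i l fun hil => hlk (hil.symm.trans hik)) _
  · refine (Finset.sum_eq_zero fun l _ => ?_).symm
    split_ifs with hlk
    · exact mul_eq_zero_of_left (hA i l fun hil => hik (hil.trans hlk)) _
    · rfl

variable [DecidableEq ι]

@[simp]
theorem blockPart_mul_diagonal_sub_diagonal_mul (A : Matrix ι ι R) :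
    blockPart d (A * diagonal d - diagonal d * A) = 0 := by
  ext i j
  rw [blockPart_apply, mul_diagonal_sub_diagonal_mul_apply]
  split_ifs with h <;> simp [h]

theorem mul_diagonal_sub_diagonal_mul_eq_zero_iff [NoZeroDivisors R] {A : Matrix ι ι R} :
    A * diagonal d - diagonal d * A = 0 ↔ blockPart d A = A := by
  rw [blockPart_eq_self_iff, ← Matrix.ext_iff]
  refine forall₂_congr fun i j => ?_
  rw [mul_diagonal_sub_diagonal_mul_apply, zero_apply, mul_eq_zero, sub_eq_zero, eq_comm]
  tauto

end CommRing

theorem exists_mul_diagonal_sub_diagonal_mul_eq [Fintype ι] [DecidableEq ι] [Field R]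
    [DecidableEq R] {d : ι → R} {C : Matrix ι ι R} (hC : blockPart d C = 0) :
    ∃ X : Matrix ι ι R, X * diagonal d - diagonal d * X = C := by
  refine ⟨of fun i j => C i j / (d j - d i), ?_⟩
  ext i j
  rw [mul_diagonal_sub_diagonal_mul_apply, of_apply]
  by_cases h : d i = d j
  · simpa [h] using (congrFun (congrFun hC i) j).symm
  · exact div_mul_cancel₀ _ (sub_ne_zero.2 (Ne.symm h))

section RCLike

variable {𝕜 : Type*} [RCLike 𝕜]

theorem IsHermitian.blockPart [DecidableEq 𝕜] {M : Matrix ι ι 𝕜} (hM : M.IsHermitian)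
    (d : ι → 𝕜) : (blockPart d M).IsHermitian := by
  ext i j
  by_cases h : d i = d j
  · simp [h, ← hM.apply i j]
  · simp [h, Ne.symm h]

variable [Fintype ι]

open scoped ComplexOrder in
theorem eq_zero_of_smul_add_mul_sub_mul_eq_zero {N : Matrix ι ι 𝕜} (hN : N.IsHermitian)
    {c : 𝕜} (hc : star c ≠ c) {Y : Matrix ι ι 𝕜} (hY : c • Y + N * Y - Y * N = 0) : Y = 0 := by
  have hcY : c • Y = Y * N - N * Y := by
    rw [← sub_eq_zero, ← hY]; abel
  have ht : star (Yᴴ * Y).trace = (Yᴴ * Y).trace := by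
    rw [← trace_conjTranspose, conjTranspose_mul, conjTranspose_conjTranspose]
  have hs : star (Yᴴ * (Y * N - N * Y)).trace = (Yᴴ * (Y * N - N * Y)).trace := by
    rw [← trace_conjTranspose, mul_sub, conjTranspose_sub, trace_sub, trace_sub]
    simp only [conjTranspose_mul, conjTranspose_conjTranspose, hN.eq, ← Matrix.mul_assoc]
    rw [Matrix.mul_assoc N, trace_mul_comm N]
  have hct : c * (Yᴴ * Y).trace = (Yᴴ * (Y * N - N * Y)).trace := by
    rw [← hcY, Matrix.mul_smul, trace_smul, smul_eq_mul]
  have hct' : star c * (Yᴴ * Y).trace = (Yᴴ * (Y * N - N * Y)).trace := by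
    rw [← ht, ← star_mul', hct, hs]
  have key : (star c - c) * (Yᴴ * Y).trace = 0 := by rw [sub_mul, hct, hct', sub_self]
  rw [mul_eq_zero, sub_eq_zero, trace_conjTranspose_mul_self_eq_zero_iff] at key
  exact key.resolve_left hc

theorem bijective_smul_add_mul_sub_mul [DecidableEq ι] {N : Matrix ι ι 𝕜} (hN : N.IsHermitian)
    {c : 𝕜} (hc : star c ≠ c) :
    Function.Bijective fun Y : Matrix ι ι 𝕜 => c • Y + N * Y - Y * N := by
  let L : Matrix ι ι 𝕜 →ₗ[𝕜] Matrix ι ι 𝕜 :=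
    c • LinearMap.id + LinearMap.mulLeft 𝕜 N - LinearMap.mulRight 𝕜 N
  have hL : Function.Injective L := by
    refine (injective_iff_map_eq_zero L).2 fun Y hY => ?_
    exact eq_zero_of_smul_add_mul_sub_mul_eq_zero hN hc hY
  exact ⟨hL, LinearMap.injective_iff_surjective.1 hL⟩

theorem existsUnique_mul_diagonal_sub_diagonal_mul_eq_and_blockPart_eq_zero [DecidableEq ι]
    [DecidableEq 𝕜] {d : ι → 𝕜} {M C : Matrix ι ι 𝕜} (hM : (blockPart d M).IsHermitian)
    {c : 𝕜} (hc : star c ≠ c) (hC : blockPart d C = 0) :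
    ∃! B : Matrix ι ι 𝕜, B * diagonal d - diagonal d * B = C ∧
      blockPart d ((c • 1 + M) * B - B * blockPart d M) = 0 := by
  set N := blockPart d M
  have hNN : blockPart d N = N := blockPart_blockPart M
  let F : Matrix ι ι 𝕜 →ₗ[𝕜] Matrix ι ι 𝕜 :=
    blockPart d ∘ₗ (LinearMap.mulLeft 𝕜 (c • 1 + M) - LinearMap.mulRight 𝕜 N)
  change ∃! B, B * diagonal d - diagonal d * B = C ∧ F B = 0
  have hF_block {Y : Matrix ι ι 𝕜} (hY : blockPart d Y = Y) : F Y = c • Y + N * Y - Y * N := by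
    change blockPart d ((c • 1 + M) * Y - Y * N) = _
    rw [map_sub, add_mul, map_add, smul_mul_assoc, one_mul, map_smul, hY,
      blockPart_mul_of_blockPart_right hY, blockPart_mul_of_blockPart_left hY, hNN]
  have hblockPart_sylvester (Y : Matrix ι ι 𝕜) :
      blockPart d (c • Y + N * Y - Y * N) =
        c • blockPart d Y + N * blockPart d Y - blockPart d Y * N := by
    rw [map_sub, map_add, map_smul, blockPart_mul_of_blockPart_left hNN,
      blockPart_mul_of_blockPart_right hNN]
  have hsylvester := bijective_smul_add_mul_sub_mul hM hc
  refine existsUnique_of_exists_of_unique ?_ ?_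
  · obtain ⟨X, hX⟩ := exists_mul_diagonal_sub_diagonal_mul_eq hC
    obtain ⟨Y, hY⟩ := hsylvester.2 (-F X)
    have hFX : blockPart d (F X) = F X := blockPart_blockPart _
    refine ⟨X + blockPart d Y, ?_, ?_⟩
    · rw [add_mul, mul_add, add_sub_add_comm, hX,
        mul_diagonal_sub_diagonal_mul_eq_zero_iff.2 (blockPart_blockPart Y), add_zero]
    · rw [map_add, hF_block (blockPart_blockPart Y), ← hblockPart_sylvester]
      simp only at hY
      rw [hY, map_neg, hFX, add_neg_cancel]
  · rintro B₁ B₂ ⟨h₁, hF₁⟩ ⟨h₂, hF₂⟩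
    have hblock : blockPart d (B₁ - B₂) = B₁ - B₂ := by
      rw [← mul_diagonal_sub_diagonal_mul_eq_zero_iff, sub_mul, mul_sub, sub_sub_sub_comm, h₁, h₂,
        sub_self]
    have hsub := eq_zero_of_smul_add_mul_sub_mul_eq_zero hM hc
      (by rw [← hF_block hblock, map_sub, hF₁, hF₂, sub_self])
    exact sub_eq_zero.1 hsub

end RCLike

end Matrix

theorem formal_solution_recursion_existsUnique_general (m : ℕ)
    (ξ : Fin m → ℝ) (Ξ : Matrix (Fin m) (Fin m) ℂ)
    (hΞ : Ξ = Matrix.diagonal fun i => (ξ i : ℂ))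
    (κ : ℂ) (hκre : κ.re = 0) (hκ : κ ≠ 0)
    (M : Matrix (Fin m) (Fin m) ℂ) (hM : M.IsHermitian)
    (N : Matrix (Fin m) (Fin m) ℂ)
    (hN : ∀ i j, (ξ i = ξ j → N i j = M i j) ∧ (ξ i ≠ ξ j → N i j = 0)) :
    ∃! h : ℕ → Matrix (Fin m) (Fin m) ℂ,
      h 0 = 1 ∧
      ∀ j : ℕ,
        h (j + 1) * Ξ - Ξ * h (j + 1)
          = ((κ * (j : ℂ)) • (1 : Matrix (Fin m) (Fin m) ℂ) + M) * h j - h j * N := by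
  set d : Fin m → ℂ := fun i => (ξ i : ℂ)
  have hNM : N = blockPart d M := by
    ext i j
    by_cases h : ξ i = ξ j <;> simp [d, h, hN]
  subst hΞ hNM
  have hc (j : ℕ) : star (κ * (j + 1 : ℕ)) ≠ κ * (j + 1 : ℕ) := by
    intro h
    have him : κ.im = 0 := by
      simpa [Complex.mul_im, hκre, Nat.cast_add_one_ne_zero] using Complex.conj_eq_iff_im.1 h
    exact hκ (Complex.ext hκre him)
  refine Nat.existsUnique_seq_of_existsUnique_step
    (fun j A => blockPart d (((κ * (j : ℂ)) • 1 + M) * A - A * blockPart d M) = 0)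
    (fun j A B => B * diagonal d - diagonal d * B = ((κ * (j : ℂ)) • 1 + M) * A - A * blockPart d M)
    1 ?_
    (fun j A B hAB => hAB ▸ blockPart_mul_diagonal_sub_diagonal_mul B) fun j A hA => ?_
  · simp
  · simpa using existsUnique_mul_diagonal_sub_diagonal_mul_eq_and_blockPart_eq_zero
      (hM.blockPart d) (hc j) hA

/-- Existence and uniqueness of the coefficients of the formal fundamental solution
`Ĥ(z) = 1 + h₁ z⁻¹ + h₂ z⁻² + ⋯` of the gcKZ ordinary differential equation
`κ dF/dz = (Ξ + M/z) F`: for every `j ≥ 1`,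
`h_j Ξ − Ξ h_j = (κ(j−1)·I + M)·h_{j−1} − h_{j−1}·N`,
where `Ξ` is real diagonal, `κ` is nonzero purely imaginary, `M` is Hermitian and
`N` is the `Ξ`-block part of `M`. -/
theorem formal_solution_recursion_existsUnique (m : ℕ) (hm : 1 ≤ m)
    (ξ : Fin m → ℝ) (Ξ : Matrix (Fin m) (Fin m) ℂ)
    (hΞ : Ξ = Matrix.diagonal fun i => (ξ i : ℂ))
    (κ : ℂ) (hκre : κ.re = 0) (hκ : κ ≠ 0)
    (M : Matrix (Fin m) (Fin m) ℂ) (hM : M.IsHermitian)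
    (N : Matrix (Fin m) (Fin m) ℂ)
    (hN : ∀ i j, (ξ i = ξ j → N i j = M i j) ∧ (ξ i ≠ ξ j → N i j = 0)) :
    ∃! h : ℕ → Matrix (Fin m) (Fin m) ℂ,
      h 0 = 1 ∧
      ∀ j : ℕ,
        h (j + 1) * Ξ - Ξ * h (j + 1)
          = ((κ * (j : ℂ)) • (1 : Matrix (Fin m) (Fin m) ℂ) + M) * h j - h j * N :=
  formal_solution_recursion_existsUnique_general m ξ Ξ hΞ κ hκre hκ M hM N hN
end

section
/- Let V and W be finite-dimensional complex vector spaces, τ : V → V a linear involution (τ∘τ = id), and S : V⊗V → V⊗V, K : W⊗V → W⊗V linear maps with (τ⊗τ)∘S∘(τ⊗τ) = S. On W⊗V⊗V set K⁰¹ := K⊗id_V, t₁ := id_W⊗τ⊗id_V, P := id_W⊗(flip of the two V-factors), S¹² := id_W⊗S, S_τ := (τ⊗id_V)∘S∘(τ⊗id_V), S_τ¹² := id_W⊗S_τ, S²¹ := P∘S¹²∘P, S_τ²¹ := P∘S_τ¹²∘P, K⁰² := P∘K⁰¹∘P. Define σ := t₁∘K⁰¹ and b := P∘S¹². Then the type-B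 braid relation σ∘b∘σ∘b = b∘σ∘b∘σ holds if and only if K and S satisfy the τ-twisted reflection equation K⁰¹∘S_τ²¹∘K⁰²∘S¹² = S²¹∘K⁰²∘S_τ¹²∘K⁰¹. -/
open TensorProduct

noncomputable section

variable {W V : Type} [AddCommGroup W] [Module ℂ W] [AddCommGroup V] [Module ℂ V]

/-- `K` acting on the `W`-factor (slot 0) and the first `V`-factor (slot 1)
of `W ⊗ V ⊗ V`. -/
def K01 (K : W ⊗[ℂ] V →ₗ[ℂ] W ⊗[ℂ] V) :
    W ⊗[ℂ] (V ⊗[ℂ] V) →ₗ[ℂ] W ⊗[ℂ] (V ⊗[ℂ] V) :=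
  (TensorProduct.assoc ℂ W V V).toLinearMap ∘ₗ LinearMap.rTensor V K ∘ₗ
    (TensorProduct.assoc ℂ W V V).symm.toLinearMap

/-- `τ` acting on the first `V`-factor (slot 1) of `W ⊗ V ⊗ V`. -/
def t1 (τ : V →ₗ[ℂ] V) : W ⊗[ℂ] (V ⊗[ℂ] V) →ₗ[ℂ] W ⊗[ℂ] (V ⊗[ℂ] V) :=
  LinearMap.lTensor W (LinearMap.rTensor V τ)

/-- The flip of the two `V`-factors of `W ⊗ V ⊗ V`. -/
def Pv : W ⊗[ℂ] (V ⊗[ℂ] V) →ₗ[ℂ] W ⊗[ℂ] (V ⊗[ℂ] V) :=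
  LinearMap.lTensor W (TensorProduct.comm ℂ V V).toLinearMap

/-- `S` acting on the two `V`-factors (slots 1 and 2) of `W ⊗ V ⊗ V`. -/
def S12 (S : V ⊗[ℂ] V →ₗ[ℂ] V ⊗[ℂ] V) :
    W ⊗[ℂ] (V ⊗[ℂ] V) →ₗ[ℂ] W ⊗[ℂ] (V ⊗[ℂ] V) :=
  LinearMap.lTensor W S

/-- `S_τ = (τ ⊗ id) ∘ S ∘ (τ ⊗ id)`. -/
def Stau (τ : V →ₗ[ℂ] V) (S : V ⊗[ℂ] V →ₗ[ℂ] V ⊗[ℂ] V) :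
    V ⊗[ℂ] V →ₗ[ℂ] V ⊗[ℂ] V :=
  LinearMap.rTensor V τ ∘ₗ S ∘ₗ LinearMap.rTensor V τ

/-- Rewriting a commutation relation inside a right-associated composition chain. -/
private lemma tr {M : Type} [AddCommGroup M] [Module ℂ M]
    {a b c d : M →ₗ[ℂ] M} (h : a ∘ₗ b = c ∘ₗ d) (x : M →ₗ[ℂ] M) :
    a ∘ₗ (b ∘ₗ x) = c ∘ₗ (d ∘ₗ x) := by
  rw [← LinearMap.comp_assoc, h, LinearMap.comp_assoc]

/-- Cancelling an involution at the head of a chain. -/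
private lemma inv_cancel {M : Type} [AddCommGroup M] [Module ℂ M]
    {a : M →ₗ[ℂ] M} (h : a ∘ₗ a = LinearMap.id) (x : M →ₗ[ℂ] M) :
    a ∘ₗ (a ∘ₗ x) = x := by
  rw [← LinearMap.comp_assoc, h, LinearMap.id_comp]

/-- The type-B braid relation `σbσb = bσbσ` for `σ = t₁ ∘ K⁰¹` and `b = P ∘ S¹²`
on `W ⊗ V ⊗ V` is equivalent to the `τ`-twisted reflection equation
`K⁰¹ S_τ²¹ K⁰² S¹² = S²¹ K⁰² S_τ¹² K⁰¹`. -/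
theorem typeB_braid_iff_twisted_reflection (W V : Type)
    [AddCommGroup W] [Module ℂ W] [AddCommGroup V] [Module ℂ V]
    [FiniteDimensional ℂ W] [FiniteDimensional ℂ V]
    (τ : V →ₗ[ℂ] V) (hτ : τ ∘ₗ τ = LinearMap.id)
    (S : V ⊗[ℂ] V →ₗ[ℂ] V ⊗[ℂ] V)
    (hS : TensorProduct.map τ τ ∘ₗ S ∘ₗ TensorProduct.map τ τ = S)
    (K : W ⊗[ℂ] V →ₗ[ℂ] W ⊗[ℂ] V) :
    ((t1 τ ∘ₗ K01 K) ∘ₗ (Pv ∘ₗ S12 S) ∘ₗ (t1 τ ∘ₗ K01 K) ∘ₗ (Pv ∘ₗ S12 S)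
        = (Pv ∘ₗ S12 S) ∘ₗ (t1 τ ∘ₗ K01 K) ∘ₗ (Pv ∘ₗ S12 S) ∘ₗ (t1 τ ∘ₗ K01 K))
      ↔ (K01 K ∘ₗ (Pv ∘ₗ S12 (Stau τ S) ∘ₗ Pv) ∘ₗ (Pv ∘ₗ K01 K ∘ₗ Pv) ∘ₗ S12 S
          = (Pv ∘ₗ S12 S ∘ₗ Pv) ∘ₗ (Pv ∘ₗ K01 K ∘ₗ Pv) ∘ₗ S12 (Stau τ S) ∘ₗ K01 K) := by
  -- abbreviations
  set rτ : V ⊗[ℂ] V →ₗ[ℂ] V ⊗[ℂ] V := LinearMap.rTensor V τ with hrτdef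
  set lτ : V ⊗[ℂ] V →ₗ[ℂ] V ⊗[ℂ] V := LinearMap.lTensor V τ with hlτdef
  set S' : V ⊗[ℂ] V →ₗ[ℂ] V ⊗[ℂ] V := Stau τ S with hS'def
  -- basic involutions at the V ⊗ V level
  have hrr : rτ ∘ₗ rτ = LinearMap.id := by
    rw [hrτdef, ← LinearMap.rTensor_comp, hτ, LinearMap.rTensor_id]
  have hll : lτ ∘ₗ lτ = LinearMap.id := by
    rw [hlτdef, ← LinearMap.lTensor_comp, hτ, LinearMap.lTensor_id]
  have hmap1 : lτ ∘ₗ rτ = TensorProduct.map τ τ := by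
    rw [hlτdef, hrτdef, LinearMap.lTensor_comp_rTensor]
  have hmap2 : rτ ∘ₗ lτ = TensorProduct.map τ τ := by
    rw [hlτdef, hrτdef, LinearMap.rTensor_comp_lTensor]
  have hmm : TensorProduct.map τ τ ∘ₗ TensorProduct.map τ τ = LinearMap.id := by
    rw [← TensorProduct.map_comp, hτ, TensorProduct.map_id]
  -- S commutes with map τ τ
  have hSm : S ∘ₗ TensorProduct.map τ τ = TensorProduct.map τ τ ∘ₗ S := by
    conv_lhs => rw [← hS]
    rw [LinearMap.comp_assoc, LinearMap.comp_assoc, hmm, LinearMap.comp_id]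
  -- key V ⊗ V level commutation relations
  have hSr : S ∘ₗ rτ = rτ ∘ₗ S' := by
    rw [hS'def]; unfold Stau; rw [← hrτdef]
    exact (inv_cancel hrr _).symm
  have hS'r : S' ∘ₗ rτ = rτ ∘ₗ S := by
    rw [hS'def]; unfold Stau; rw [← hrτdef, LinearMap.comp_assoc, LinearMap.comp_assoc, hrr,
      LinearMap.comp_id]
  have hSl : S ∘ₗ lτ = lτ ∘ₗ S' := by
    have e3 : TensorProduct.map τ τ ∘ₗ rτ = lτ := by
      rw [← hmap1, LinearMap.comp_assoc, hrr, LinearMap.comp_id]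
    have e1 : lτ ∘ₗ S' = TensorProduct.map τ τ ∘ₗ (S ∘ₗ rτ) := by
      rw [hS'def]; unfold Stau
      rw [← hrτdef, ← LinearMap.comp_assoc, hmap1]
    have e2 : TensorProduct.map τ τ ∘ₗ (S ∘ₗ rτ) = S ∘ₗ (TensorProduct.map τ τ ∘ₗ rτ) := by
      rw [← LinearMap.comp_assoc, ← hSm, LinearMap.comp_assoc]
    rw [e1, e2, e3]
  have hS'l : S' ∘ₗ lτ = lτ ∘ₗ S := by
    have h1 : lτ ∘ₗ (S' ∘ₗ lτ) = S := by
      rw [← LinearMap.comp_assoc, ← hSl, LinearMap.comp_assoc, hll, LinearMap.comp_id]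
    rw [← h1, inv_cancel hll]
  -- operators on W ⊗ (V ⊗ V)
  set T : W ⊗[ℂ] (V ⊗[ℂ] V) →ₗ[ℂ] W ⊗[ℂ] (V ⊗[ℂ] V) := t1 τ with hTdef
  set Q : W ⊗[ℂ] (V ⊗[ℂ] V) →ₗ[ℂ] W ⊗[ℂ] (V ⊗[ℂ] V) := K01 K with hQdef
  set P : W ⊗[ℂ] (V ⊗[ℂ] V) →ₗ[ℂ] W ⊗[ℂ] (V ⊗[ℂ] V) := Pv with hPdef
  set A : W ⊗[ℂ] (V ⊗[ℂ] V) →ₗ[ℂ] W ⊗[ℂ] (V ⊗[ℂ] V) := S12 S with hAdef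
  set A' : W ⊗[ℂ] (V ⊗[ℂ] V) →ₗ[ℂ] W ⊗[ℂ] (V ⊗[ℂ] V) := S12 (Stau τ S) with hA'def
  set t2 : W ⊗[ℂ] (V ⊗[ℂ] V) →ₗ[ℂ] W ⊗[ℂ] (V ⊗[ℂ] V) :=
    LinearMap.lTensor W (LinearMap.lTensor V τ) with ht2def
  -- lifting V ⊗ V level identities
  have lift : ∀ {f g h k : V ⊗[ℂ] V →ₗ[ℂ] V ⊗[ℂ] V}, f ∘ₗ g = h ∘ₗ k →
      LinearMap.lTensor W f ∘ₗ LinearMap.lTensor W g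
        = LinearMap.lTensor W h ∘ₗ LinearMap.lTensor W k := by
    intro f g h k hfg
    rw [← LinearMap.lTensor_comp, ← LinearMap.lTensor_comp, hfg]
  have hTT : T ∘ₗ T = LinearMap.id := by
    rw [hTdef]; unfold t1
    rw [← LinearMap.lTensor_comp, ← hrτdef, hrr, LinearMap.lTensor_id]
  have ht2t2 : t2 ∘ₗ t2 = LinearMap.id := by
    rw [ht2def, ← LinearMap.lTensor_comp, ← hlτdef, hll, LinearMap.lTensor_id]
  have hPP : P ∘ₗ P = LinearMap.id := by
    rw [hPdef]; unfold Pv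
    rw [← LinearMap.lTensor_comp]
    have : (TensorProduct.comm ℂ V V).toLinearMap ∘ₗ (TensorProduct.comm ℂ V V).toLinearMap
        = LinearMap.id := by ext v v'; simp
    rw [this, LinearMap.lTensor_id]
  have hAT : A ∘ₗ T = T ∘ₗ A' := by
    rw [hAdef, hA'def, hTdef]; unfold S12 t1; exact lift (by rw [← hrτdef, ← hS'def]; exact hSr)
  have hA'T : A' ∘ₗ T = T ∘ₗ A := by
    rw [hAdef, hA'def, hTdef]; unfold S12 t1; exact lift (by rw [← hrτdef, ← hS'def]; exact hS'r)
  have hAt2 : A ∘ₗ t2 = t2 ∘ₗ A' := by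
    rw [hAdef, hA'def, ht2def]; unfold S12; exact lift (by rw [← hlτdef, ← hS'def]; exact hSl)
  have hA't2 : A' ∘ₗ t2 = t2 ∘ₗ A := by
    rw [hAdef, hA'def, ht2def]; unfold S12; exact lift (by rw [← hlτdef, ← hS'def]; exact hS'l)
  have hPT : P ∘ₗ T = t2 ∘ₗ P := by
    rw [hPdef, hTdef, ht2def]; unfold Pv t1
    refine lift ?_
    ext v v'; simp
  have hPt2 : P ∘ₗ t2 = T ∘ₗ P := by
    rw [hPdef, hTdef, ht2def]; unfold Pv t1
    refine lift ?_
    ext v v'; simp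
  have ht2T : t2 ∘ₗ T = T ∘ₗ t2 := by
    rw [hTdef, ht2def]; unfold t1
    refine lift ?_
    rw [LinearMap.lTensor_comp_rTensor, LinearMap.rTensor_comp_lTensor]
  have hQt2 : Q ∘ₗ t2 = t2 ∘ₗ Q := by
    have he : t2 ∘ₗ (TensorProduct.assoc ℂ W V V).toLinearMap
        = (TensorProduct.assoc ℂ W V V).toLinearMap ∘ₗ LinearMap.lTensor (W ⊗[ℂ] V) τ := by
      rw [ht2def]; ext w v v'; simp
    have hmid : LinearMap.lTensor (W ⊗[ℂ] V) τ ∘ₗ LinearMap.rTensor V K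
        = LinearMap.rTensor V K ∘ₗ LinearMap.lTensor (W ⊗[ℂ] V) τ := by
      rw [LinearMap.lTensor_comp_rTensor, LinearMap.rTensor_comp_lTensor]
    have hee : (TensorProduct.assoc ℂ W V V).symm.toLinearMap ∘ₗ
        (TensorProduct.assoc ℂ W V V).toLinearMap = LinearMap.id := by
      ext w v v'; simp
    have hee2 : (TensorProduct.assoc ℂ W V V).toLinearMap ∘ₗ
        (TensorProduct.assoc ℂ W V V).symm.toLinearMap = LinearMap.id := by
      ext w v v'; simp
    have hQe : Q ∘ₗ (TensorProduct.assoc ℂ W V V).toLinearMap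
        = (TensorProduct.assoc ℂ W V V).toLinearMap ∘ₗ LinearMap.rTensor V K := by
      rw [hQdef]; unfold K01
      rw [LinearMap.comp_assoc, LinearMap.comp_assoc, hee, LinearMap.comp_id]
    have h1 : (Q ∘ₗ t2) ∘ₗ (TensorProduct.assoc ℂ W V V).toLinearMap
        = (t2 ∘ₗ Q) ∘ₗ (TensorProduct.assoc ℂ W V V).toLinearMap := by
      conv_lhs => rw [LinearMap.comp_assoc, he, ← LinearMap.comp_assoc, hQe,
        LinearMap.comp_assoc]
      conv_rhs => rw [LinearMap.comp_assoc, hQe, ← LinearMap.comp_assoc, he,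
        LinearMap.comp_assoc]
      rw [hmid]
    calc Q ∘ₗ t2
        = ((Q ∘ₗ t2) ∘ₗ (TensorProduct.assoc ℂ W V V).toLinearMap) ∘ₗ
            (TensorProduct.assoc ℂ W V V).symm.toLinearMap := by
          rw [LinearMap.comp_assoc, hee2, LinearMap.comp_id]
      _ = ((t2 ∘ₗ Q) ∘ₗ (TensorProduct.assoc ℂ W V V).toLinearMap) ∘ₗ
            (TensorProduct.assoc ℂ W V V).symm.toLinearMap := by rw [h1]
      _ = t2 ∘ₗ Q := by rw [LinearMap.comp_assoc, hee2, LinearMap.comp_id]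
  -- normalize goal to right-associated chains
  simp only [LinearMap.comp_assoc]
  -- the braid sides equal (T ∘ t2) composed with the reflection sides
  have hL : T ∘ₗ (Q ∘ₗ (P ∘ₗ (A ∘ₗ (T ∘ₗ (Q ∘ₗ (P ∘ₗ A))))))
      = T ∘ₗ (t2 ∘ₗ (Q ∘ₗ (P ∘ₗ (A' ∘ₗ (Q ∘ₗ (P ∘ₗ A)))))) := by
    rw [tr hAT, tr hPT, tr hQt2]
  have hR : P ∘ₗ (A ∘ₗ (T ∘ₗ (Q ∘ₗ (P ∘ₗ (A ∘ₗ (T ∘ₗ Q))))))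
      = T ∘ₗ (t2 ∘ₗ (P ∘ₗ (A ∘ₗ (Q ∘ₗ (P ∘ₗ (A' ∘ₗ Q)))))) := by
    rw [tr (x := Q ∘ₗ (P ∘ₗ (A ∘ₗ (T ∘ₗ Q)))) hAT]
    rw [tr hAT, tr (x := A' ∘ₗ (Q ∘ₗ (P ∘ₗ (T ∘ₗ (A' ∘ₗ Q))))) hPT, tr hPT,
      tr hQt2, tr hA't2, tr hPt2, tr ht2T]
  rw [hL, hR, inv_cancel hPP, inv_cancel hPP]
  constructor
  · intro h
    have h2 := congrArg (fun x => t2 ∘ₗ (T ∘ₗ x)) h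
    simpa only [inv_cancel hTT, inv_cancel ht2t2] using h2
  · intro h
    rw [h]

end
end
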